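/- arXiv:math/9502216 — 11 statements merged into one kernel-verified Lean document; each statement's English description precedes it below -/
import Mathlib

section
/- Let K be a commutative ring and let f, g : ℝ → K be Noetherian sequences. Then their convolution f ⊛ g is again a Noetherian sequence, i.e. for every c : ℝ the set {b ∈ Function.support (f ⊛ g) | b ≤ c} is finite. -/
/-- A Noetherian sequence: all "principal ideals" of the support are finite. -/
def IsNoetherianSeq {K : Type*} [Zero K] (f : ℝ → K) : Prop :=
  ∀ a : ℝ, {b ∈ Function.support f | b ≤ a}.Finite

/-- Convolution of sequences. -/
noncomputable def conv {K : Type*} [CommRing K] (f g : ℝ → K) : ℝ → K :=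
  fun c => ∑ᶠ a, f a * g (c - a)

theorem stmt1 {K : Type*} [CommRing K] (f g : ℝ → K)
    (hf : IsNoetherianSeq f) (hg : IsNoetherianSeq g) :
    IsNoetherianSeq (conv f g) := by
  intro c
  rcases (Function.support f).eq_empty_or_nonempty with hfe | ⟨a0, ha0⟩
  · rw [Function.support_eq_empty_iff] at hfe
    have : ∀ x, conv f g x = 0 := by
      intro x
      apply finsum_eq_zero_of_forall_eq_zero
      intro a; simp [hfe]
    apply Set.Finite.subset Set.finite_empty
    intro x hx
    exact absurd (this x) hx.1
  rcases (Function.support g).eq_empty_or_nonempty with hge | ⟨b0, hb0⟩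
  · rw [Function.support_eq_empty_iff] at hge
    have : ∀ x, conv f g x = 0 := by
      intro x
      apply finsum_eq_zero_of_forall_eq_zero
      intro a; simp [hge]
    apply Set.Finite.subset Set.finite_empty
    intro x hx
    exact absurd (this x) hx.1
  -- minima of the supports
  obtain ⟨mf, hmf_mem, hmf_min⟩ :
      ∃ mf ∈ {b ∈ Function.support f | b ≤ a0}, ∀ x ∈ {b ∈ Function.support f | b ≤ a0}, mf ≤ x := by
    obtain ⟨mf, h1, h2⟩ := Set.exists_min_image _ id (hf a0) ⟨a0, ha0, le_refl a0⟩
    exact ⟨mf, h1, h2⟩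
  obtain ⟨mg, hmg_mem, hmg_min⟩ :
      ∃ mg ∈ {b ∈ Function.support g | b ≤ b0}, ∀ x ∈ {b ∈ Function.support g | b ≤ b0}, mg ≤ x := by
    obtain ⟨mg, h1, h2⟩ := Set.exists_min_image _ id (hg b0) ⟨b0, hb0, le_refl b0⟩
    exact ⟨mg, h1, h2⟩
  have hmf : ∀ x ∈ Function.support f, mf ≤ x := by
    intro x hx
    by_cases h : x ≤ a0
    · exact hmf_min x ⟨hx, h⟩
    · exact le_trans hmf_mem.2 (le_of_not_ge h)
  have hmg : ∀ x ∈ Function.support g, mg ≤ x := by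
    intro x hx
    by_cases h : x ≤ b0
    · exact hmg_min x ⟨hx, h⟩
    · exact le_trans hmg_mem.2 (le_of_not_ge h)
  apply Set.Finite.subset (((hf (c - mg)).prod (hg (c - mf))).image (fun p => p.1 + p.2))
  rintro x ⟨hx, hxc⟩
  have hne : ∃ a, f a * g (x - a) ≠ 0 := by
    by_contra h
    push_neg at h
    exact hx (finsum_eq_zero_of_forall_eq_zero h)
  obtain ⟨a, ha⟩ := hne
  have hfa : f a ≠ 0 := fun h => ha (by simp [h])
  have hgb : g (x - a) ≠ 0 := fun h => ha (by simp [h])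
  refine ⟨(a, x - a), ⟨⟨hfa, ?_⟩, ⟨hgb, ?_⟩⟩, by simp⟩
  · have := hmg _ hgb
    dsimp only
    linarith
  · have := hmf _ hfa
    dsimp only
    linarith
end

section
/- Let K be an integral domain and let f, g : ℝ → K be nonzero Noetherian sequences. Then the convolution f ⊛ g is nonzero. (Hence the Noetherian algebra over an integral domain has no zero divisors.) -/
lemma exists_min_support {K : Type*} [Zero K] (f : ℝ → K)
    (hf : IsNoetherianSeq f) (hf0 : f ≠ 0) :
    ∃ a₀, f a₀ ≠ 0 ∧ ∀ b, f b ≠ 0 → a₀ ≤ b := by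
  obtain ⟨x, hx⟩ : ∃ x, f x ≠ 0 := Function.ne_iff.mp hf0
  have hS : ({b ∈ Function.support f | b ≤ x}).Finite := hf x
  have hne : ({b ∈ Function.support f | b ≤ x}).Nonempty := ⟨x, hx, le_refl x⟩
  obtain ⟨a₀, ha₀, hmin⟩ : ∃ a₀ ∈ {b ∈ Function.support f | b ≤ x}, ∀ a' ∈ {b ∈ Function.support f | b ≤ x}, id a' ≤ id a₀ → id a₀ = id a' := by
    obtain ⟨a, ha, hm⟩ := Set.Finite.exists_minimalFor id _ hS hne
    exact ⟨a, ha, fun a' h1 h2 => le_antisymm (hm h1 h2) h2⟩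
  refine ⟨a₀, ha₀.1, fun b hb => ?_⟩
  rcases le_or_gt b x with h | h
  · by_contra hab
    push_neg at hab
    have := hmin b ⟨hb, h⟩ (le_of_lt hab)
    exact absurd this (ne_of_gt hab)
  · exact le_trans ha₀.2 h.le

theorem stmt4 {K : Type*} [CommRing K] [IsDomain K] (f g : ℝ → K)
    (hf : IsNoetherianSeq f) (hg : IsNoetherianSeq g)
    (hf0 : f ≠ 0) (hg0 : g ≠ 0) :
    conv f g ≠ 0 := by
  obtain ⟨a₀, ha₀, hamin⟩ := exists_min_support f hf hf0
  obtain ⟨b₀, hb₀, hbmin⟩ := exists_min_support g hg hg0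
  intro h
  have hc : conv f g (a₀ + b₀) = 0 := congrFun h _
  have key : (∑ᶠ a, f a * g (a₀ + b₀ - a)) = f a₀ * g b₀ := by
    have := finsum_eq_single (fun a => f a * g (a₀ + b₀ - a)) a₀ ?_
    · simpa using this
    · intro a ha
      by_cases hfa : f a = 0
      · simp [hfa]
      · have h1 : a₀ ≤ a := hamin a hfa
        have h2 : a₀ + b₀ - a < b₀ := by
          have : a₀ < a := lt_of_le_of_ne h1 (Ne.symm ha)
          linarith
        have : g (a₀ + b₀ - a) = 0 := by
          by_contra hg'
          exact absurd (hbmin _ hg') (not_le.mpr h2)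
        simp [this]
  rw [conv] at hc
  rw [key] at hc
  exact mul_ne_zero ha₀ hb₀ hc
end

section
/- Let K be an integral domain and let f, g : ℝ → K be nonzero Noetherian sequences, with d_f the least element of the support of f and d_g the least element of the support of g (these least elements exist). Then the support of f ⊛ g has least element d_f + d_g, and (f ⊛ g) (d_f + d_g) = f d_f * g d_g. In particular the degree of a product is the sum of the degrees and the leading coefficient of a product is the product of the leading coefficients. -/
theorem stmt5 {K : Type*} [CommRing K] [IsDomain K] (f g : ℝ → K)
    (hf : IsNoetherianSeq f) (hg : IsNoetherianSeq g)
    (hf0 : f ≠ 0) (hg0 : g ≠ 0) (df dg : ℝ)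
    (hdf : IsLeast (Function.support f) df)
    (hdg : IsLeast (Function.support g) dg) :
    IsLeast (Function.support (conv f g)) (df + dg) ∧
      conv f g (df + dg) = f df * g dg := by
  have key : conv f g (df + dg) = f df * g dg := by
    unfold conv
    have : ∑ᶠ a, f a * g (df + dg - a) = f df * g (df + dg - df) := by
      apply finsum_eq_single
      intro a ha
      rcases lt_or_ge a df with h | h
      · have hz : f a = 0 := by
          by_contra h0
          exact absurd (hdf.2 h0) (not_le.mpr h)
        simp [hz]
      · have hz : g (df + dg - a) = 0 := by
          by_contra h0
          have h1 := hdg.2 h0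
          have : a = df := le_antisymm (by linarith) h
          exact ha this
        simp [hz]
    simpa using this
  have hne : f df * g dg ≠ 0 := mul_ne_zero hdf.1 hdg.1
  refine ⟨⟨?_, ?_⟩, key⟩
  · rw [Function.mem_support, key]; exact hne
  · intro c hc
    by_contra hlt
    push_neg at hlt
    apply hc
    show (∑ᶠ a, f a * g (c - a)) = 0
    apply finsum_eq_zero_of_forall_eq_zero
    intro a
    rcases lt_or_ge a df with h | h
    · have hz : f a = 0 := by
        by_contra h0; exact absurd (hdf.2 h0) (not_le.mpr h)
      simp [hz]
    · have hz : g (c - a) = 0 := by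
        by_contra h0
        have := hdg.2 h0
        linarith
      simp [hz]
end

section
/- Let K be a field and let f : ℝ → K be a nonzero Noetherian sequence. Then there exists a Noetherian sequence g : ℝ → K such that f ⊛ g = δ₀ and g ⊛ f = δ₀. (Hence the Noetherian algebra over a field is a field.) -/
/-- The delta sequence, the multiplicative identity for convolution. -/
noncomputable def delta (K : Type*) [Zero K] [One K] : ℝ → K :=
  fun c => if c = 0 then 1 else 0

section Aux

open Set Function

/-- A locally-finite-below set of reals is PWO. -/
lemma aux_isPWO {A : Set ℝ} (hA : ∀ a : ℝ, {b ∈ A | b ≤ a}.Finite) : A.IsPWO := by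
  rw [Set.isPWO_iff_isWF, Set.isWF_iff_no_descending_seq]
  intro u hu hmem
  have hfin := hA (u 0)
  have hsub : Set.range u ⊆ {b ∈ A | b ≤ u 0} := by
    rintro _ ⟨n, rfl⟩
    exact ⟨hmem n, hu.antitone (Nat.zero_le n)⟩
  exact Set.infinite_range_of_injective hu.injective (hfin.subset hsub)

lemma aux_filter_pos_sum (l : List ℝ) (h : ∀ y ∈ l, 0 ≤ y) :
    (l.filter (fun y => decide (0 < y))).sum = l.sum := by
  induction l with
  | nil => simp
  | cons a l ih =>
    have ih' := ih (fun y hy => h y (List.mem_cons_of_mem _ hy))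
    by_cases h0 : 0 < a
    · simp [List.filter_cons, h0, ih']
    · have ha : a = 0 := le_antisymm (not_lt.1 h0) (h a List.mem_cons_self)
      simp [List.filter_cons, h0, ha, ih']

lemma aux_finite_sums (T : Finset ℝ) (h0 : (0:ℝ) ∈ T) (n : ℕ) :
    {x : ℝ | ∃ l : List ℝ, l.length ≤ n ∧ (∀ y ∈ l, y ∈ T) ∧ l.sum = x}.Finite := by
  induction n with
  | zero =>
    refine (Set.finite_singleton (0:ℝ)).subset ?_
    rintro x ⟨l, hl, _, rfl⟩
    rw [Nat.le_zero, List.length_eq_zero_iff] at hl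
    simp [hl]
  | succ n ih =>
    refine ((T.finite_toSet.image2 (· + ·) ih)).subset ?_
    rintro x ⟨l, hl, hT, rfl⟩
    cases l with
    | nil => exact ⟨0, h0, 0, ⟨[], by simp⟩, by simp⟩
    | cons a l =>
      exact ⟨a, hT a List.mem_cons_self, l.sum,
        ⟨l, Nat.le_of_succ_le_succ hl, fun y hy => hT y (List.mem_cons_of_mem _ hy), rfl⟩, rfl⟩

/-- key combinatorial lemma: the additive closure of a locally-finite-below set of
nonnegative reals is locally finite below. -/
lemma aux_closure_locfin {S : Set ℝ} (hpos : ∀ x ∈ S, 0 ≤ x)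
    (hS : ∀ a : ℝ, {b ∈ S | b ≤ a}.Finite) (a : ℝ) :
    {b ∈ (AddSubmonoid.closure S : Set ℝ) | b ≤ a}.Finite := by
  classical
  set P : Set ℝ := {b ∈ S | b ≤ a} ∩ {b | 0 < b} with hP
  have hPfin : P.Finite := (hS a).inter_of_left _
  by_cases hPe : P.Nonempty
  · obtain ⟨δ, hδP, hδmin⟩ : ∃ δ ∈ P, ∀ y ∈ P, id y ≤ id δ → id δ = id y := by
      obtain ⟨δ, hδ⟩ := hPfin.exists_minimal hPe
      exact ⟨δ, hδ.1, fun y hy hle => le_antisymm (hδ.2 hy hle) hle⟩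
    have hδ0 : 0 < δ := hδP.2
    set N : ℕ := ⌈a / δ⌉₊ with hN
    set T : Finset ℝ := insert (0:ℝ) hPfin.toFinset with hT
    refine (aux_finite_sums T (Finset.mem_insert_self 0 _) N).subset ?_
    rintro x ⟨hx, hxa⟩
    obtain ⟨l, hlS, hlsum⟩ := AddSubmonoid.exists_list_of_mem_closure hx
    have hlpos : ∀ y ∈ l, (0:ℝ) ≤ y := fun y hy => hpos y (hlS y hy)
    set l' : List ℝ := l.filter (fun y => decide (0 < y)) with hl'
    have hsum' : l'.sum = x := by rw [hl', aux_filter_pos_sum l hlpos, hlsum]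
    have hl'mem : ∀ y ∈ l', y ∈ S ∧ 0 < y := by
      intro y hy
      rw [hl', List.mem_filter] at hy
      exact ⟨hlS y hy.1, of_decide_eq_true hy.2⟩
    have hl'pos : ∀ y ∈ l', (0:ℝ) ≤ y := fun y hy => (hl'mem y hy).2.le
    have hle : ∀ y ∈ l', y ≤ a := by
      intro y hy
      calc y ≤ l'.sum := List.single_le_sum hl'pos y hy
        _ = x := hsum'
        _ ≤ a := hxa
    have hT' : ∀ y ∈ l', y ∈ T := by
      intro y hy
      rw [hT, Finset.mem_insert, Set.Finite.mem_toFinset]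
      exact Or.inr ⟨⟨(hl'mem y hy).1, hle y hy⟩, (hl'mem y hy).2⟩
    have hδle : ∀ y ∈ l', δ ≤ y := by
      intro y hy
      by_contra hlt
      push_neg at hlt
      have hyP : y ∈ P := ⟨⟨(hl'mem y hy).1, hle y hy⟩, (hl'mem y hy).2⟩
      exact (ne_of_lt hlt) (hδmin y hyP hlt.le).symm
    have hcard : (l'.length : ℝ) * δ ≤ x := by
      calc (l'.length : ℝ) * δ = l'.length • δ := by rw [nsmul_eq_mul]
        _ ≤ l'.sum := List.card_nsmul_le_sum l' δ hδle
        _ = x := hsum'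
    have hlen : l'.length ≤ N := by
      have h1 : (l'.length : ℝ) ≤ a / δ := by
        rw [le_div_iff₀ hδ0]
        exact hcard.trans hxa
      have h2 : (l'.length : ℝ) ≤ (N : ℝ) := h1.trans (Nat.le_ceil _)
      exact_mod_cast h2
    exact ⟨l', hlen, hT', hsum'⟩
  · -- no positive elements ≤ a in S: then every x in the set is a sum of...
    refine (Set.finite_singleton (0:ℝ)).subset ?_
    rintro x ⟨hx, hxa⟩
    obtain ⟨l, hlS, hlsum⟩ := AddSubmonoid.exists_list_of_mem_closure hx
    have hall0 : ∀ y ∈ l, y = (0:ℝ) := by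
      intro y hy
      by_contra hne
      have hypos : 0 < y := lt_of_le_of_ne (hpos y (hlS y hy)) (Ne.symm hne)
      have hysum : y ≤ l.sum := List.single_le_sum (fun z hz => hpos z (hlS z hz)) y hy
      have hxpos : 0 < x := lt_of_lt_of_le hypos (hlsum ▸ hysum)
      -- every entry is ≤ x ≤ a, so y ∈ P, contradiction
      exact hPe ⟨y, ⟨hlS y hy, (hlsum ▸ hysum).trans hxa⟩, hypos⟩
    have : l.sum = 0 := List.sum_eq_zero hall0
    simp [← hlsum, this]

end Aux

open HahnSeries in
lemma aux_conv_coeff {K : Type*} [CommRing K] (F G : HahnSeries ℝ K) (c : ℝ) :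
    conv F.coeff G.coeff c = (F * G).coeff c := by
  classical
  rw [conv, HahnSeries.coeff_mul]
  set s := Finset.addAntidiagonal F.isPWO_support G.isPWO_support c with hs
  have hsupp : Function.support (fun a => F.coeff a * G.coeff (c - a)) ⊆ ↑(s.image Prod.fst) := by
    intro a ha
    rw [Function.mem_support] at ha
    have h1 : F.coeff a ≠ 0 := left_ne_zero_of_mul ha
    have h2 : G.coeff (c - a) ≠ 0 := right_ne_zero_of_mul ha
    simp only [Finset.coe_image, Set.mem_image, Finset.mem_coe]
    exact ⟨(a, c - a), Finset.mem_addAntidiagonal.2 ⟨h1, h2, by ring⟩, rfl⟩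
  rw [finsum_eq_sum_of_support_subset _ hsupp]
  rw [Finset.sum_image ?hinj]
  case hinj =>
    intro p hp q hq hpq
    have hp' := (Finset.mem_addAntidiagonal.1 hp).2.2
    have hq' := (Finset.mem_addAntidiagonal.1 hq).2.2
    ext
    · exact hpq
    · have : p.1 + p.2 = q.1 + q.2 := by rw [hp', hq']
      rw [hpq] at this
      exact add_left_cancel this
  refine Finset.sum_congr rfl ?_
  intro p hp
  have hp' := (Finset.mem_addAntidiagonal.1 hp).2.2
  have : c - p.1 = p.2 := by linarith
  rw [this]

theorem stmt6 {K : Type*} [Field K] (f : ℝ → K)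
    (hf : IsNoetherianSeq f) (hf0 : f ≠ 0) :
    ∃ g : ℝ → K, IsNoetherianSeq g ∧ conv f g = delta K ∧ conv g f = delta K := by
  classical
  set F : HahnSeries ℝ K := ⟨f, aux_isPWO hf⟩ with hFdef
  have hcoeff : F.coeff = f := rfl
  have hFne : F ≠ 0 := by
    intro h
    apply hf0
    funext a
    have := congrArg (fun x => HahnSeries.coeff x a) h
    simpa [hcoeff] using this
  set o : ℝ := F.order with ho
  set r : K := (F.leadingCoeff)⁻¹ with hrdef
  have hr : r * F.leadingCoeff = 1 :=
    inv_mul_cancel₀ (HahnSeries.leadingCoeff_ne_zero.mpr hFne)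
  have hy : 0 < (1 - HahnSeries.single (-F.order) r * F).orderTop := HahnSeries.unit_aux F hr (-F.order) (neg_add_cancel _)
  set y : HahnSeries ℝ K := 1 - HahnSeries.single (-F.order) r * F with hydef
  set s := HahnSeries.SummableFamily.powers y with hsdef
  set G : HahnSeries ℝ K := HahnSeries.single (-F.order) r * s.hsum with hGdef
  -- F * G = 1
  have hFG : F * G = 1 := by
    have h := HahnSeries.SummableFamily.one_sub_self_mul_hsum_powers hy
    have h1y : 1 - y = HahnSeries.single (-F.order) r * F := by rw [hydef]; ring
    have h2 : F * (HahnSeries.single (-F.order) r * s.hsum) = 1 := by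
      calc F * (HahnSeries.single (-F.order) r * s.hsum) = (1 - y) * s.hsum := by
            rw [h1y]; ring
        _ = 1 := h
    exact h2
  -- support facts
  have horder : ∀ v ∈ Function.support f, o ≤ v := by
    intro v hv
    exact HahnSeries.order_le_of_coeff_ne_zero (x := F) (g := v) hv
  have hy_supp : y.support ⊆ insert (0:ℝ) ((fun c => -o + c) '' Function.support f) := by
    intro b hb
    rw [HahnSeries.mem_support] at hb
    by_cases hb0 : b = 0
    · exact Set.mem_insert_iff.2 (Or.inl hb0)
    · right
      have h1 : (1 : HahnSeries ℝ K).coeff b = 0 := by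
        rw [HahnSeries.coeff_one, if_neg hb0]
      have h2 : (HahnSeries.single (-F.order) r * F).coeff b ≠ 0 := by
        intro h
        apply hb
        rw [hydef]
        simp [HahnSeries.coeff_sub, h1, h, hb0]
      have h3 : b ∈ (HahnSeries.single (-F.order) r * F).support := h2
      have h4 := HahnSeries.support_mul_subset h3
      obtain ⟨u, hu, v, hv, rfl⟩ := Set.mem_add.1 h4
      have hu' : u = -o := HahnSeries.support_single_subset hu
      exact ⟨v, hv, by rw [hu']⟩
  set S : Set ℝ := y.support with hSdef
  have hSpos : ∀ b ∈ S, (0:ℝ) ≤ b := by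
    intro b hb
    rcases Set.mem_insert_iff.1 (hy_supp hb) with h | ⟨v, hv, rfl⟩
    · exact le_of_eq h.symm
    · have := horder v hv; dsimp only; linarith
  have hSfin : ∀ a : ℝ, {b ∈ S | b ≤ a}.Finite := by
    intro a
    refine (((hf (a + o)).image (fun c => -o + c)).insert 0).subset ?_
    rintro b ⟨hb, hba⟩
    rcases Set.mem_insert_iff.1 (hy_supp hb) with h | ⟨v, hv, rfl⟩
    · exact Set.mem_insert_iff.2 (Or.inl h)
    · refine Set.mem_insert_iff.2 (Or.inr ⟨v, ⟨hv, ?_⟩, rfl⟩)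
      dsimp only at hba ⊢; linarith
  -- support of powers
  have hpow : ∀ n : ℕ, (y ^ n).support ⊆ (AddSubmonoid.closure S : Set ℝ) := by
    intro n
    induction n with
    | zero =>
      intro b hb
      rw [pow_zero, HahnSeries.support_one, Set.mem_singleton_iff] at hb
      rw [hb]
      exact AddSubmonoid.zero_mem _
    | succ n ih =>
      intro b hb
      rw [pow_succ] at hb
      obtain ⟨u, hu, v, hv, rfl⟩ := Set.mem_add.1 (HahnSeries.support_mul_subset hb)
      exact AddSubmonoid.add_mem _ (ih hu) (AddSubmonoid.subset_closure hv)
  have hGsupp : G.support ⊆ (fun c => -o + c) '' (AddSubmonoid.closure S : Set ℝ) := by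
    intro b hb
    obtain ⟨u, hu, v, hv, rfl⟩ := Set.mem_add.1 (HahnSeries.support_mul_subset hb)
    have hu' : u = -o := HahnSeries.support_single_subset hu
    have hv' : v ∈ (AddSubmonoid.closure S : Set ℝ) := by
      have := HahnSeries.SummableFamily.support_hsum_subset hv
      rw [Set.mem_iUnion] at this
      obtain ⟨n, hn⟩ := this
      rw [hsdef] at hn
      rw [show (HahnSeries.SummableFamily.powers y) n = y ^ n from
        congrFun (HahnSeries.SummableFamily.coe_powers hy) n] at hn
      exact hpow n hn
    exact ⟨v, hv', by rw [hu']⟩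
  -- the inverse sequence
  refine ⟨G.coeff, ?_, ?_, ?_⟩
  · intro a
    refine ((aux_closure_locfin hSpos hSfin (a + o)).image (fun c => -o + c)).subset ?_
    rintro b ⟨hb, hba⟩
    obtain ⟨c, hc, rfl⟩ := hGsupp hb
    refine ⟨c, ⟨hc, ?_⟩, rfl⟩
    dsimp only at hba ⊢; linarith
  · funext c
    rw [← hcoeff, aux_conv_coeff, hFG, HahnSeries.coeff_one]
    rfl
  · funext c
    rw [← hcoeff, aux_conv_coeff, mul_comm, hFG, HahnSeries.coeff_one]
    rfl
end

section
/- Let K be a field and let f : ℝ → K be a nonzero Artinian sequence. Then there exists an Artinian sequence g : ℝ → K such that f ⊛ g = δ₀ and g ⊛ f = δ₀. (Hence the Artinian algebra over a field is a field.) -/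
/-- An Artinian sequence: all "principal filters" of the support are finite. -/
def IsArtinianSeq {K : Type*} [Zero K] (f : ℝ → K) : Prop :=
  ∀ a : ℝ, {b ∈ Function.support f | a ≤ b}.Finite

open Function Set

section Aux
variable {K : Type*} [CommRing K] {f g h : ℝ → K}

lemma isArtinian_of_support_subset (hg : IsArtinianSeq g) (h : support f ⊆ support g) :
    IsArtinianSeq f := fun a =>
  (hg a).subset (fun b hb => ⟨h hb.1, hb.2⟩)

lemma isArtinian_zero : IsArtinianSeq (0 : ℝ → K) := by
  intro a
  convert Set.finite_empty
  simp

lemma isArtinian_delta : IsArtinianSeq (delta K) := by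
  intro a
  apply (Set.finite_singleton (0:ℝ)).subset
  rintro b ⟨hb, -⟩
  simp only [support, delta, mem_setOf_eq, ne_eq, ite_eq_right_iff, not_forall] at hb
  simp [hb.1]

/-- Maximum of the support of a nonzero Artinian sequence. -/
lemma exists_max (hf : IsArtinianSeq f) (hf0 : f ≠ 0) :
    ∃ d : ℝ, f d ≠ 0 ∧ ∀ b : ℝ, f b ≠ 0 → b ≤ d := by
  obtain ⟨s, hs⟩ := Function.ne_iff.mp hf0
  have hS : {b ∈ support f | s ≤ b}.Finite := hf s
  have hne : s ∈ {b ∈ support f | s ≤ b} := ⟨hs, le_refl s⟩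
  obtain ⟨d, hd, hdmax⟩ := Set.Finite.exists_maximalFor id _ hS ⟨s, hne⟩
  refine ⟨d, hd.1, fun b hb => ?_⟩
  rcases le_total b s with h | h
  · exact h.trans hd.2
  · by_contra hbd
    push_neg at hbd
    have := hdmax (j := b) ⟨hb, h⟩ (le_of_lt hbd)
    simp only [id] at this
    exact absurd this (not_le.mpr hbd)

/-- The summand family of a convolution has finite support. -/
lemma conv_summand_finite (hf : IsArtinianSeq f) (hg : IsArtinianSeq g) (c : ℝ) :
    (support fun a => f a * g (c - a)).Finite := by
  set S := support fun a => f a * g (c - a) with hS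
  rcases S.eq_empty_or_nonempty with h | ⟨x, hx⟩
  · rw [h]; exact Set.finite_empty
  · have hfin1 : {b ∈ support f | x ≤ b}.Finite := hf x
    have hfin2 : ((fun y => c - y) '' {b ∈ support g | c - x ≤ b}).Finite :=
      ((hg (c - x)).image _)
    apply (hfin1.union hfin2).subset
    intro y hy
    have hy1 : f y ≠ 0 := fun h0 => hy (by simp [h0])
    have hy2 : g (c - y) ≠ 0 := fun h0 => hy (by simp [h0])
    rcases le_total x y with hxy | hxy
    · exact Or.inl ⟨hy1, hxy⟩
    · exact Or.inr ⟨c - y, ⟨hy2, by linarith⟩, by ring⟩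

lemma conv_witness {c : ℝ} (hc : conv f g c ≠ 0) :
    ∃ a : ℝ, f a ≠ 0 ∧ g (c - a) ≠ 0 := by
  by_contra hcon
  push_neg at hcon
  apply hc
  apply finsum_eq_zero_of_forall_eq_zero
  intro a
  by_cases h1 : f a = 0
  · simp [h1]
  · simp [hcon a h1]

lemma conv_ub {α β : ℝ} (hα : ∀ b : ℝ, f b ≠ 0 → b ≤ α) (hβ : ∀ b : ℝ, g b ≠ 0 → b ≤ β) :
    ∀ c : ℝ, conv f g c ≠ 0 → c ≤ α + β := by
  intro c hc
  obtain ⟨a, h1, h2⟩ := conv_witness hc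
  have := hα a h1
  have := hβ _ h2
  linarith

lemma isArtinian_conv (hf : IsArtinianSeq f) (hg : IsArtinianSeq g) :
    IsArtinianSeq (conv f g) := by
  by_cases hf0 : f = 0
  · apply isArtinian_of_support_subset isArtinian_zero
    intro c hc
    obtain ⟨a, h1, -⟩ := conv_witness hc
    exact absurd (congrFun hf0 a) h1
  by_cases hg0 : g = 0
  · apply isArtinian_of_support_subset isArtinian_zero
    intro c hc
    obtain ⟨a, -, h2⟩ := conv_witness hc
    exact absurd (congrFun hg0 (c - a)) h2
  obtain ⟨df, hdf, hdfmax⟩ := exists_max hf hf0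
  obtain ⟨dg, hdg, hdgmax⟩ := exists_max hg hg0
  intro t
  apply (Set.Finite.image2 (· + ·) (hf (t - dg)) (hg (t - df))).subset
  rintro c ⟨hc, htc⟩
  obtain ⟨a, h1, h2⟩ := conv_witness hc
  have ha : a ≤ df := hdfmax a h1
  have hb : c - a ≤ dg := hdgmax _ h2
  exact ⟨a, ⟨h1, by linarith⟩, c - a, ⟨h2, by linarith⟩, by ring⟩

lemma conv_delta_left : conv (delta K) h = h := by
  funext c
  rw [conv, finsum_eq_single _ (0 : ℝ)]
  · simp [delta]
  · intro x hx
    simp [delta, hx]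

lemma conv_comm : conv f g = conv g f := by
  funext c
  rw [conv, conv, ← finsum_comp_equiv (Equiv.subLeft c)]
  apply finsum_congr
  intro b
  simp [Equiv.subLeft, mul_comm]

lemma conv_delta_right : conv h (delta K) = h := by
  rw [conv_comm, conv_delta_left]

end Aux

noncomputable def convpow {K : Type*} [CommRing K] (u : ℝ → K) : ℕ → (ℝ → K)
  | 0 => delta K
  | n + 1 => conv u (convpow u n)

section Pow
variable {K : Type*} [CommRing K] {u : ℝ → K} {m : ℝ}

lemma isArtinian_convpow (hu : IsArtinianSeq u) (n : ℕ) : IsArtinianSeq (convpow u n) := by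
  induction n with
  | zero => exact isArtinian_delta
  | succ n ih => exact isArtinian_conv hu ih

lemma convpow_ub (hm : ∀ b : ℝ, u b ≠ 0 → b ≤ m) (n : ℕ) :
    ∀ c : ℝ, convpow u n c ≠ 0 → c ≤ n * m := by
  induction n with
  | zero =>
    intro c hc
    simp only [convpow, delta, ne_eq, ite_eq_right_iff, not_forall] at hc
    simp [hc.1]
  | succ n ih =>
    intro c hc
    have := conv_ub hm ih c hc
    push_cast
    linarith

end Pow

section Geom
variable {K : Type*} [CommRing K] {u : ℝ → K} {m : ℝ}

/-- The geometric series `∑ n, u^(⊛n)`. -/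
noncomputable def geom (u : ℝ → K) : ℝ → K := fun c => ∑ᶠ n : ℕ, convpow u n c

lemma convpow_nat_bound (hm : m < 0) (hub : ∀ b : ℝ, u b ≠ 0 → b ≤ m)
    {a c : ℝ} {n : ℕ} (h : convpow u n c ≠ 0) (hac : a ≤ c) : n ≤ ⌊a / m⌋₊ := by
  have h1 : c ≤ n * m := convpow_ub hub n c h
  exact Nat.le_floor ((le_div_iff_of_neg hm).mpr (by linarith))

lemma geom_witness {c : ℝ} (h : geom u c ≠ 0) : ∃ n : ℕ, convpow u n c ≠ 0 := by
  by_contra hcon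
  push_neg at hcon
  exact h (finsum_eq_zero_of_forall_eq_zero hcon)

lemma isArtinian_geom (hu : IsArtinianSeq u) (hm : m < 0)
    (hub : ∀ b : ℝ, u b ≠ 0 → b ≤ m) : IsArtinianSeq (geom u) := by
  intro a
  have hfin : (⋃ n ∈ Set.Iic (⌊a / m⌋₊), {b ∈ support (convpow u n) | a ≤ b}).Finite :=
    (Set.finite_Iic _).biUnion (fun n _ => isArtinian_convpow hu n a)
  apply hfin.subset
  rintro b ⟨hb, hab⟩
  obtain ⟨n, hn⟩ := geom_witness hb
  exact Set.mem_biUnion (convpow_nat_bound hm hub hn hab) ⟨hn, hab⟩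

lemma geom_ub (hm : m < 0) (hub : ∀ b : ℝ, u b ≠ 0 → b ≤ m) :
    ∀ c : ℝ, geom u c ≠ 0 → c ≤ 0 := by
  intro c hc
  obtain ⟨n, hn⟩ := geom_witness hc
  have h1 : c ≤ n * m := convpow_ub hub n c hn
  nlinarith [Nat.cast_nonneg (α := ℝ) n, hm.le]

lemma geom_inv (hu : IsArtinianSeq u) (hm : m < 0) (hub : ∀ b : ℝ, u b ≠ 0 → b ≤ m) :
    conv (fun x => delta K x - u x) (geom u) = delta K := by
  have hG : IsArtinianSeq (geom u) := isArtinian_geom hu hm hub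
  funext c
  set M : ℕ := ⌊(c - m) / m⌋₊ + 1 with hM
  -- Step A : split the convolution
  have stepA : conv (fun x => delta K x - u x) (geom u) c = geom u c - conv u (geom u) c := by
    show ∑ᶠ a, (delta K a - u a) * geom u (c - a) = _
    have : ∀ a : ℝ, (delta K a - u a) * geom u (c - a)
        = delta K a * geom u (c - a) - u a * geom u (c - a) := fun a => sub_mul _ _ _
    rw [finsum_congr this,
      finsum_sub_distrib (conv_summand_finite isArtinian_delta hG c)
        (conv_summand_finite hu hG c)]
    have : (∑ᶠ a, delta K a * geom u (c - a)) = conv (delta K) (geom u) c := rfl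
    rw [this, conv_delta_left]
    rfl
  -- Step B : compute conv u (geom u) c
  have stepB : conv u (geom u) c = ∑ n ∈ Finset.range M, convpow u (n + 1) c := by
    have key : ∀ a : ℝ, u a * geom u (c - a)
        = ∑ n ∈ Finset.range M, u a * convpow u n (c - a) := by
      intro a
      by_cases ha : u a = 0
      · simp [ha]
      · have ham : a ≤ m := hub a ha
        have hGeq : geom u (c - a) = ∑ n ∈ Finset.range M, convpow u n (c - a) := by
          apply finsum_eq_sum_of_support_subset
          intro n hn
          simp only [Finset.coe_range, Set.mem_Iio]
          have : n ≤ ⌊(c - m) / m⌋₊ :=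
            convpow_nat_bound hm hub hn (by linarith)
          omega
        rw [hGeq, Finset.mul_sum]
    show (∑ᶠ a, u a * geom u (c - a)) = _
    rw [finsum_congr key,
      ← sum_finsum_comm _ _ (fun n _ => conv_summand_finite hu (isArtinian_convpow hu n) c)]
    rfl
  -- Step C : expand geom u c
  have stepC : geom u c = ∑ n ∈ Finset.range (M + 1), convpow u n c := by
    apply finsum_eq_sum_of_support_subset
    intro n hn
    simp only [Finset.coe_range, Set.mem_Iio]
    rcases n with _ | k
    · omega
    · have h1 : c ≤ (k + 1 : ℕ) * m := convpow_ub hub _ c hn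
      have hk : (k : ℝ) ≤ (c - m) / m := by
        rw [le_div_iff_of_neg hm]
        push_cast at h1 ⊢
        linarith
      have := Nat.le_floor hk
      omega
  rw [stepA, stepB, stepC, Finset.sum_range_succ']
  simp [convpow, delta]
end Geom

section Main
variable {K : Type*} [CommRing K] {f g : ℝ → K}

lemma isArtinian_shift (k : K) (d : ℝ) (hf : IsArtinianSeq f) :
    IsArtinianSeq (fun c => k * f (c + d)) := by
  intro a
  apply ((hf (a + d)).image (fun x => x - d)).subset
  rintro b ⟨hb, hab⟩
  have hb' : f (b + d) ≠ 0 := fun h0 => hb (by simp [h0])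
  exact ⟨b + d, ⟨hb', by linarith⟩, by ring⟩

lemma isArtinian_sub (hf : IsArtinianSeq f) (hg : IsArtinianSeq g) :
    IsArtinianSeq (fun c => f c - g c) := by
  intro a
  apply ((hf a).union (hg a)).subset
  rintro b ⟨hb, hab⟩
  by_cases h1 : f b = 0
  · exact Or.inr ⟨fun h2 => hb (by simp [h1, h2]), hab⟩
  · exact Or.inl ⟨h1, hab⟩

end Main

theorem stmt7 {K : Type*} [Field K] (f : ℝ → K)
    (hf : IsArtinianSeq f) (hf0 : f ≠ 0) :
    ∃ g : ℝ → K, IsArtinianSeq g ∧ conv f g = delta K ∧ conv g f = delta K := by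
  obtain ⟨d, hd, hdmax⟩ := exists_max hf hf0
  set f₁ : ℝ → K := fun c => (f d)⁻¹ * f (c + d) with hf₁def
  have hf₁ : IsArtinianSeq f₁ := isArtinian_shift _ _ hf
  have hf₁0 : f₁ 0 = 1 := by simp [hf₁def, inv_mul_cancel₀ hd]
  have hf₁ub : ∀ b : ℝ, f₁ b ≠ 0 → b ≤ 0 := by
    intro b hb
    have : f (b + d) ≠ 0 := fun h0 => hb (by simp [hf₁def, h0])
    have := hdmax _ this
    linarith
  set u : ℝ → K := fun c => delta K c - f₁ c with hudef
  have hu : IsArtinianSeq u := isArtinian_sub isArtinian_delta hf₁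
  have huub0 : ∀ b : ℝ, u b ≠ 0 → b < 0 := by
    intro b hb
    have hbne : b ≠ 0 := by
      rintro rfl
      apply hb
      simp [hudef, delta, hf₁0]
    have : f₁ b ≠ 0 := by
      intro h0
      apply hb
      simp [hudef, delta, hbne, h0]
    exact lt_of_le_of_ne (hf₁ub b this) hbne
  obtain ⟨m, hm, hub⟩ : ∃ m : ℝ, m < 0 ∧ ∀ b : ℝ, u b ≠ 0 → b ≤ m := by
    by_cases hu0 : u = 0
    · exact ⟨-1, by norm_num, fun b hb => absurd (congrFun hu0 b) hb⟩
    · obtain ⟨m, hm1, hm2⟩ := exists_max hu hu0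
      exact ⟨m, huub0 m hm1, hm2⟩
  have hGinv : conv f₁ (geom u) = delta K := by
    have : (fun x => delta K x - u x) = f₁ := by
      funext x; simp [hudef]
    rw [← this]
    exact geom_inv hu hm hub
  have hG : IsArtinianSeq (geom u) := isArtinian_geom hu hm hub
  refine ⟨fun c => (f d)⁻¹ * geom u (c + d), isArtinian_shift _ _ hG, ?_, ?_⟩
  · funext c
    show (∑ᶠ a, f a * ((f d)⁻¹ * geom u (c - a + d))) = delta K c
    have key : ∀ a : ℝ, f a * ((f d)⁻¹ * geom u (c - a + d))
        = f₁ ((Equiv.subRight d) a) * geom u (c - (Equiv.subRight d) a) := by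
      intro a
      simp only [Equiv.subRight_apply, hf₁def]
      have : a - d + d = a := by ring
      rw [this]
      have : c - a + d = c - (a - d) := by ring
      rw [this]
      ring
    rw [finsum_congr key,
      finsum_comp_equiv (Equiv.subRight d) (f := fun b => f₁ b * geom u (c - b))]
    exact congrFun hGinv c
  · rw [conv_comm]
    funext c
    show (∑ᶠ a, f a * ((f d)⁻¹ * geom u (c - a + d))) = delta K c
    have key : ∀ a : ℝ, f a * ((f d)⁻¹ * geom u (c - a + d))
        = f₁ ((Equiv.subRight d) a) * geom u (c - (Equiv.subRight d) a) := by
      intro a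
      simp only [Equiv.subRight_apply, hf₁def]
      have : a - d + d = a := by ring
      rw [this]
      have : c - a + d = c - (a - d) := by ring
      rw [this]
      ring
    rw [finsum_congr key,
      finsum_comp_equiv (Equiv.subRight d) (f := fun b => f₁ b * geom u (c - b))]
    exact congrFun hGinv c
end

section
/- Let K be a commutative ring and let f : ℝ → K be a nonzero Noetherian sequence, with d the least element of the support of f. If f d is a unit of K, then there exists a Noetherian sequence g with f ⊛ g = δ₀. Conversely, if K is an integral domain and there exists a Noetherian sequence g with f ⊛ g = δ₀, then f d is a unit of K. (A nonzero Noetherian series has a multiplicative inverse if its leading coefficient has a multiplicative inverse.) -/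
open Function

section Aux

variable {K : Type*} [CommRing K]

lemma delta_noeth : IsNoetherianSeq (delta K) := by
  intro a
  apply Set.Finite.subset (Set.finite_singleton 0)
  rintro b ⟨hb, -⟩
  rw [mem_support] at hb
  simp only [Set.mem_singleton_iff]
  by_contra h
  exact hb (if_neg h)

lemma noeth_least {f : ℝ → K} (hf : IsNoetherianSeq f) (h : (support f).Nonempty) :
    ∃ e, IsLeast (support f) e := by
  obtain ⟨t, ht⟩ := h
  have hne : {b ∈ support f | b ≤ t}.Nonempty := ⟨t, ht, le_refl t⟩
  obtain ⟨e, he, hmin⟩ := Set.exists_min_image _ id (hf t) hne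
  refine ⟨e, he.1, fun b hb => ?_⟩
  rcases le_or_gt b t with hbt | hbt
  · exact hmin b ⟨hb, hbt⟩
  · exact le_trans he.2 hbt.le

lemma noeth_shift {f g : ℝ → K} {d : ℝ} (hf : IsNoetherianSeq f)
    (h : ∀ b, g b ≠ 0 → f (b + d) ≠ 0) : IsNoetherianSeq g := by
  intro t
  apply Set.Finite.subset ((hf (t + d)).image (fun x => x - d))
  rintro b ⟨hb, hbt⟩
  exact ⟨b + d, ⟨mem_support.2 (h b (mem_support.1 hb)), by linarith⟩, by ring⟩

lemma conv_term_fin {f g : ℝ → K} (hf : IsNoetherianSeq f) (hg : IsNoetherianSeq g) (c : ℝ) :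
    (support fun a => f a * g (c - a)).Finite := by
  rcases Set.eq_empty_or_nonempty (support g) with h | h
  · apply Set.Finite.subset (Set.finite_empty)
    intro a ha
    rw [mem_support] at ha
    have : g (c - a) = 0 := by
      by_contra hg0
      exact (h ▸ mem_support.2 hg0 : (c - a) ∈ (∅ : Set ℝ))
    exact ha (by rw [this, mul_zero])
  · obtain ⟨e, he⟩ := noeth_least hg h
    apply Set.Finite.subset (hf (c - e))
    intro a ha
    rw [mem_support] at ha
    have h1 : f a ≠ 0 := fun h0 => ha (by rw [h0, zero_mul])
    have h2 : g (c - a) ≠ 0 := fun h0 => ha (by rw [h0, mul_zero])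
    have := he.2 (mem_support.2 h2)
    exact ⟨mem_support.2 h1, by linarith⟩

lemma conv_ne_zero {f g : ℝ → K} {c : ℝ} (h : conv f g c ≠ 0) :
    ∃ a, f a ≠ 0 ∧ g (c - a) ≠ 0 := by
  by_contra hc
  push_neg at hc
  apply h
  apply finsum_eq_zero_of_forall_eq_zero
  intro a
  rcases eq_or_ne (f a) 0 with h0 | h0
  · rw [h0, zero_mul]
  · rw [hc a h0, mul_zero]

lemma conv_noeth {f g : ℝ → K} (hf : IsNoetherianSeq f) (hg : IsNoetherianSeq g) :
    IsNoetherianSeq (conv f g) := by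
  intro t
  rcases Set.eq_empty_or_nonempty (support f) with h | h
  · apply Set.Finite.subset (Set.finite_empty)
    rintro b ⟨hb, -⟩
    obtain ⟨a, ha1, -⟩ := conv_ne_zero (mem_support.1 hb)
    exact (h ▸ mem_support.2 ha1 : a ∈ (∅ : Set ℝ))
  rcases Set.eq_empty_or_nonempty (support g) with h' | h'
  · apply Set.Finite.subset (Set.finite_empty)
    rintro b ⟨hb, -⟩
    obtain ⟨a, -, ha2⟩ := conv_ne_zero (mem_support.1 hb)
    exact (h' ▸ mem_support.2 ha2 : (b - a) ∈ (∅ : Set ℝ))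
  obtain ⟨df, hdf⟩ := noeth_least hf h
  obtain ⟨dg, hdg⟩ := noeth_least hg h'
  apply Set.Finite.subset (Set.Finite.image2 (· + ·) (hf (t - dg)) (hg (t - df)))
  rintro b ⟨hb, hbt⟩
  obtain ⟨a, ha1, ha2⟩ := conv_ne_zero (mem_support.1 hb)
  have h1 := hdf.2 (mem_support.2 ha1)
  have h2 := hdg.2 (mem_support.2 ha2)
  exact Set.mem_image2.2 ⟨a, ⟨mem_support.2 ha1, by linarith⟩,
    b - a, ⟨mem_support.2 ha2, by linarith⟩, by ring⟩

/-- Convolution powers. -/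
noncomputable def convPow (v : ℝ → K) : ℕ → ℝ → K
  | 0 => delta K
  | n + 1 => conv v (convPow v n)

lemma convPow_noeth {v : ℝ → K} (hv : IsNoetherianSeq v) (n : ℕ) :
    IsNoetherianSeq (convPow v n) := by
  induction n with
  | zero => exact delta_noeth
  | succ n ih => exact conv_noeth hv ih

lemma convPow_support {v : ℝ → K} {ε : ℝ} (hε : 0 < ε) (hv : ∀ s, v s ≠ 0 → ε ≤ s) :
    ∀ n : ℕ, ∀ c : ℝ, convPow v n c ≠ 0 → (n : ℝ) * ε ≤ c := by
  intro n
  induction n with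
  | zero =>
    intro c hc
    have hc0 : c = 0 := by
      by_contra h
      exact hc (if_neg h)
    rw [hc0]
    simp
  | succ n ih =>
    intro c hc
    obtain ⟨a, ha1, ha2⟩ := conv_ne_zero hc
    have h1 := hv a ha1
    have h2 := ih _ ha2
    push_cast
    nlinarith

lemma finsum_finset_sum_comm {ι : Type*} (s : Finset ι) (F : ι → ℝ → K)
    (h : ∀ i ∈ s, (support (F i)).Finite) :
    (∑ᶠ a, ∑ i ∈ s, F i a) = ∑ i ∈ s, ∑ᶠ a, F i a := by
  classical
  induction s using Finset.induction with
  | empty => simp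
  | @insert x s hx ih =>
    have hsum : (support fun a => ∑ i ∈ s, F i a).Finite := by
      apply Set.Finite.subset (Set.Finite.biUnion s.finite_toSet
        (fun i hi => h i (Finset.mem_insert_of_mem hi)))
      intro a ha
      rw [mem_support] at ha
      by_contra hcon
      apply ha
      apply Finset.sum_eq_zero
      intro i hi
      by_contra hi0
      exact hcon (Set.mem_biUnion hi (mem_support.2 hi0))
    rw [Finset.sum_insert hx, ← ih (fun i hi => h i (Finset.mem_insert_of_mem hi)),
      ← finsum_add_distrib (h x (Finset.mem_insert_self x s)) hsum]
    apply finsum_congr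
    intro a
    exact Finset.sum_insert hx

end Aux

theorem stmt8 {K : Type*} [CommRing K] (f : ℝ → K)
    (hf : IsNoetherianSeq f) (hf0 : f ≠ 0) (d : ℝ)
    (hd : IsLeast (Function.support f) d) :
    (IsUnit (f d) → ∃ g : ℝ → K, IsNoetherianSeq g ∧ conv f g = delta K) ∧
      (IsDomain K →
        (∃ g : ℝ → K, IsNoetherianSeq g ∧ conv f g = delta K) → IsUnit (f d)) := by
  constructor
  · -- forward direction
    intro hu
    obtain ⟨c0, hc0⟩ := hu.exists_left_inv
    -- the "error term" v : f shifted/normalized is δ - v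
    set v : ℝ → K := fun x => if x = 0 then 0 else -(c0 * f (x + d)) with hvdef
    have hvn : IsNoetherianSeq v := by
      apply noeth_shift hf (d := d)
      intro b hb
      rw [hvdef] at hb
      simp only at hb
      intro h0
      apply hb
      split
      · rfl
      · rw [h0, mul_zero, neg_zero]
    have hvpos : ∀ s, v s ≠ 0 → 0 < s := by
      intro s hs
      rw [hvdef] at hs
      simp only at hs
      have hs0 : s ≠ 0 := by
        intro h
        exact hs (by rw [if_pos h])
      have hfs : f (s + d) ≠ 0 := by
        intro h
        exact hs (by rw [if_neg hs0, h, mul_zero, neg_zero])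
      have := hd.2 (mem_support.2 hfs)
      rcases lt_or_eq_of_le (by linarith : 0 ≤ s) with h | h
      · exact h
      · exact absurd h.symm hs0
    have f'eq : ∀ b, c0 * f (b + d) = delta K b - v b := by
      intro b
      rcases eq_or_ne b 0 with hb | hb
      · rw [hb, zero_add]
        have h1 : delta K 0 = 1 := if_pos rfl
        have h2 : v 0 = 0 := if_pos rfl
        rw [h1, h2, sub_zero]
        exact hc0
      · rw [hvdef]
        simp only [if_neg hb, delta, if_neg hb]
        ring
    -- find a positive lower bound ε for support of v
    obtain ⟨ε, hε0, hεv⟩ : ∃ ε : ℝ, 0 < ε ∧ ∀ s, v s ≠ 0 → ε ≤ s := by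
      rcases Set.eq_empty_or_nonempty (support v) with h | h
      · exact ⟨1, one_pos, fun s hs => absurd (mem_support.2 hs)
          (by rw [h]; exact Set.notMem_empty s)⟩
      · obtain ⟨e, he⟩ := noeth_least hvn h
        exact ⟨e, hvpos e (mem_support.1 he.1), fun s hs => he.2 (mem_support.2 hs)⟩
    have powN := convPow_noeth hvn
    have powsupp := convPow_support hε0 hεv
    -- the geometric series
    set g' : ℝ → K := fun x => ∑ᶠ n : ℕ, convPow v n x with hg'def
    have hNex : ∀ x : ℝ, ∃ N : ℕ, x < (N : ℝ) * ε := by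
      intro x
      obtain ⟨N, hN⟩ := exists_nat_gt (x / ε)
      exact ⟨N, by rw [div_lt_iff₀ hε0] at hN; linarith⟩
    have g'sum : ∀ (x : ℝ) (N : ℕ), x < (N : ℝ) * ε →
        g' x = ∑ n ∈ Finset.range N, convPow v n x := by
      intro x N hxN
      rw [hg'def]
      apply finsum_eq_sum_of_support_subset
      intro n hn
      rw [mem_support] at hn
      have h1 := powsupp n x hn
      simp only [Finset.coe_range, Set.mem_Iio]
      by_contra hcon
      push_neg at hcon
      have : (N : ℝ) ≤ (n : ℝ) := Nat.cast_le.2 hcon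
      nlinarith
    have g'noeth : IsNoetherianSeq g' := by
      intro t
      obtain ⟨N, hN⟩ := hNex t
      apply Set.Finite.subset (Set.Finite.biUnion (Finset.range N).finite_toSet
        (fun n _ => (powN n) t))
      rintro b ⟨hb, hbt⟩
      rw [mem_support, hg'def] at hb
      have : ∃ n : ℕ, convPow v n b ≠ 0 := by
        by_contra hcon
        push_neg at hcon
        exact hb (finsum_eq_zero_of_forall_eq_zero hcon)
      obtain ⟨n, hn⟩ := this
      have h1 := powsupp n b hn
      have hnN : n ∈ Finset.range N := by
        rw [Finset.mem_range]
        by_contra hcon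
        push_neg at hcon
        have : (N : ℝ) ≤ (n : ℝ) := Nat.cast_le.2 hcon
        nlinarith
      exact Set.mem_biUnion hnN ⟨mem_support.2 hn, hbt⟩
    -- key identity : (v ⊛ g') x = g' x - δ x
    have key : ∀ x, (∑ᶠ a, v a * g' (x - a)) = g' x - delta K x := by
      intro x
      obtain ⟨N, hN⟩ := hNex x
      have step1 : (∑ᶠ a, v a * g' (x - a))
          = ∑ᶠ a, ∑ n ∈ Finset.range N, v a * convPow v n (x - a) := by
        apply finsum_congr
        intro a
        rcases eq_or_ne (v a) 0 with h | h
        · rw [h]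
          simp
        · rw [← Finset.mul_sum, ← g'sum (x - a) N (by have := hεv a h; linarith)]
      rw [step1, finsum_finset_sum_comm _ _
        (fun n _ => conv_term_fin hvn (powN n) x)]
      have step2 : ∀ n : ℕ, (∑ᶠ a, v a * convPow v n (x - a)) = convPow v (n + 1) x :=
        fun n => rfl
      rw [Finset.sum_congr rfl (fun n _ => step2 n)]
      have hsucc : (∑ n ∈ Finset.range (N + 1), convPow v n x)
          = (∑ n ∈ Finset.range N, convPow v (n + 1) x) + convPow v 0 x :=
        Finset.sum_range_succ' _ N
      have hg'N : g' x = ∑ n ∈ Finset.range (N + 1), convPow v n x := by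
        apply g'sum
        push_cast
        nlinarith
      have h0 : convPow v 0 x = delta K x := rfl
      rw [← h0]
      rw [hg'N, hsucc]
      ring
    -- define the inverse
    refine ⟨fun x => c0 * g' (x + d), ?_, ?_⟩
    · apply noeth_shift g'noeth (d := d)
      intro b hb h0
      exact hb (by rw [h0, mul_zero])
    · funext x
      show (∑ᶠ a, f a * (c0 * g' (x - a + d))) = delta K x
      have reindex : (∑ᶠ a, f a * (c0 * g' (x - a + d)))
          = ∑ᶠ b, (delta K b - v b) * g' (x - b) := by
        rw [← finsum_comp_equiv (Equiv.addRight d)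
          (f := fun a => f a * (c0 * g' (x - a + d)))]
        apply finsum_congr
        intro b
        have he : (Equiv.addRight d) b = b + d := rfl
        rw [he]
        have harg : x - (b + d) + d = x - b := by ring
        rw [harg, ← f'eq b]
        ring
      rw [reindex]
      have split : (∑ᶠ b, (delta K b - v b) * g' (x - b))
          = (∑ᶠ b, delta K b * g' (x - b)) - ∑ᶠ b, v b * g' (x - b) := by
        rw [← finsum_sub_distrib (conv_term_fin delta_noeth g'noeth x)
          (conv_term_fin hvn g'noeth x)]
        apply finsum_congr
        intro b
        ring
      have hdel : (∑ᶠ b, delta K b * g' (x - b)) = g' x := by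
        rw [finsum_eq_single _ 0 (fun b hb => by
          have : delta K b = 0 := if_neg hb
          rw [this, zero_mul])]
        show delta K 0 * g' (x - 0) = g' x
        rw [sub_zero]
        show (if (0:ℝ) = 0 then (1:K) else 0) * g' x = g' x
        rw [if_pos rfl, one_mul]
      rw [split, hdel, key x]
      ring
  · -- converse direction
    rintro hdom ⟨g, hg, hfg⟩
    have hgne : (support g).Nonempty := by
      by_contra h
      have hg0 : g = 0 := support_eq_empty_iff.1 (Set.not_nonempty_iff_eq_empty.1 h)
      have hc := congrFun hfg 0
      have : conv f g 0 = 0 := by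
        apply finsum_eq_zero_of_forall_eq_zero
        intro a
        rw [hg0]
        simp
      rw [this] at hc
      have : delta K 0 = (1 : K) := if_pos rfl
      rw [this] at hc
      exact one_ne_zero hc.symm
    obtain ⟨e, he⟩ := noeth_least hg hgne
    have hval : conv f g (d + e) = f d * g e := by
      show (∑ᶠ a, f a * g (d + e - a)) = f d * g e
      rw [finsum_eq_single _ d ?_]
      · norm_num
      intro a hane
      by_contra h
      have ha1 : f a ≠ 0 := fun h0 => h (by rw [h0, zero_mul])
      have ha2 : g (d + e - a) ≠ 0 := fun h0 => h (by rw [h0, mul_zero])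
      have hda := hd.2 (mem_support.2 ha1)
      have hea := he.2 (mem_support.2 ha2)
      exact hane (le_antisymm (by linarith) hda)
    have hfd : f d ≠ 0 := mem_support.1 hd.1
    have hge : g e ≠ 0 := mem_support.1 he.1
    have hne : f d * g e ≠ 0 := mul_ne_zero hfd hge
    have hdelta : delta K (d + e) = f d * g e := by rw [← hval, hfg]
    rcases eq_or_ne (d + e) 0 with hde | hde
    · apply IsUnit.of_mul_eq_one (g e)
      rw [← hdelta]
      exact if_pos hde
    · exfalso
      apply hne
      rw [← hdelta]
      exact if_neg hde
end

section
/- Let f : ℝ → ℂ be a continuous function such that f t ≠ 0 for all t and f (s + t) = f s * f t for all s, t : ℝ. Then there exist a nonzero complex number z and an integer n such that f t = z^{t;n} for all t : ℝ. -/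
open Real Complex

/-- The argument of a complex number normalized to `[0, 2π)`. -/
noncomputable def arg₀ (z : ℂ) : ℝ :=
  if 0 ≤ Complex.arg z then Complex.arg z else Complex.arg z + 2 * Real.pi

/-- The `n`-th value of `z` to the power `t`:
`z^{t;n} = |z|^t * exp(i t (arg₀ z + 2 n π))`. -/
noncomputable def cpowN (z : ℂ) (t : ℝ) (n : ℤ) : ℂ :=
  ((‖z‖ ^ t : ℝ) : ℂ) *
    Complex.exp (Complex.I * t * ((arg₀ z : ℂ) + 2 * n * (Real.pi : ℂ)))

theorem exists_exp_of_hom (f : ℝ → ℂ) (hcont : Continuous f) (hne : ∀ t : ℝ, f t ≠ 0)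
    (hhom : ∀ s t : ℝ, f (s + t) = f s * f t) : ∃ c : ℂ, ∀ t, f t = Complex.exp (c * t) := by
  have hf0 : f 0 = 1 := by
    have h := hhom 0 0
    simp only [add_zero] at h
    exact mul_left_cancel₀ (hne 0) (h.symm.trans (mul_one _).symm)
  set F : ℝ → ℂ := fun t => ∫ s in (0:ℝ)..t, f s with hF
  have hFd : ∀ t : ℝ, HasDerivAt F (f t) t := fun t =>
    intervalIntegral.integral_hasDerivAt_right (hcont.intervalIntegrable _ _)
      (hcont.stronglyMeasurable.stronglyMeasurableAtFilter) hcont.continuousAt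
  obtain ⟨h, hFh⟩ : ∃ h : ℝ, F h ≠ 0 := by
    by_contra hc
    push_neg at hc
    have : (1 : ℂ) = 0 := by
      have h1 : HasDerivAt F (1 : ℂ) 0 := by simpa [hf0] using hFd 0
      have h2 : HasDerivAt F (0 : ℂ) 0 := by
        have : F = fun _ => (0 : ℂ) := funext hc
        rw [this]; exact hasDerivAt_const _ _
      exact h1.unique h2
    exact one_ne_zero this
  have key : ∀ t : ℝ, F (t + h) - F t = f t * F h := by
    intro t
    have h1 : F t + ∫ s in t..(t+h), f s = F (t + h) :=
      intervalIntegral.integral_add_adjacent_intervals (hcont.intervalIntegrable _ _)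
        (hcont.intervalIntegrable _ _)
    have h2 : (∫ s in t..(t+h), f s) = ∫ s in (0:ℝ)..h, f (t + s) := by
      rw [intervalIntegral.integral_comp_add_left]
      simp
    have h3 : (∫ s in (0:ℝ)..h, f (t + s)) = f t * F h := by
      simp only [hhom t]
      rw [intervalIntegral.integral_const_mul]
    rw [← h1, h2, h3]; ring
  set c : ℂ := (f h - 1) / F h with hc
  have hfd : ∀ t : ℝ, HasDerivAt f (c * f t) t := by
    intro t
    have d1 : HasDerivAt (fun t : ℝ => (F (t + h) - F t) / F h) ((f (t + h) - f t) / F h) t := by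
      have e1 : HasDerivAt (fun t : ℝ => F (t + h)) (f (t + h)) t :=
        (hFd (t + h)).comp_add_const t h
      exact ((e1.sub (hFd t)).div_const _)
    have e2 : (fun t : ℝ => (F (t + h) - F t) / F h) = f := by
      funext u; rw [key u, mul_div_assoc, div_self hFh, mul_one]
    rw [e2] at d1
    have e3 : (f (t + h) - f t) / F h = c * f t := by
      rw [hhom t h, hc]; field_simp
    rwa [e3] at d1
  refine ⟨c, fun t => ?_⟩
  have hg : ∀ t : ℝ, HasDerivAt (fun t : ℝ => f t * Complex.exp (-(c * t))) 0 t := by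
    intro t
    have e1 : HasDerivAt (fun t : ℝ => -(c * (t : ℂ))) (-c) t := by
      have := ((Complex.ofRealCLM.hasDerivAt (x := t)).const_mul c).neg
      simp at this
      exact this
    have e2 := e1.cexp
    have := (hfd t).mul e2
    convert this using 1
    · rfl
    · rfl
    ring
  have hconst : ∀ t : ℝ, f t * Complex.exp (-(c * t)) = 1 := by
    intro t
    have := is_const_of_deriv_eq_zero (f := fun t : ℝ => f t * Complex.exp (-(c * t)))
      (fun x => (hg x).differentiableAt) (fun x => (hg x).deriv) t 0
    simpa [hf0] using this
  have := hconst t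
  rw [Complex.exp_neg] at this
  field_simp at this
  exact this

theorem exp_eq_cpowN (c : ℂ) : ∃ n : ℤ, ∀ t : ℝ, Complex.exp (c * t) = cpowN (Complex.exp c) t n := by
  set z := Complex.exp c with hz
  have habs : ‖z‖ = Real.exp c.re := Complex.norm_exp c
  have h1 : Complex.exp ((c.im : ℂ) * Complex.I) = Complex.exp ((Complex.arg z : ℂ) * Complex.I) := by
    have h2 : (‖z‖ : ℂ) * Complex.exp ((Complex.arg z : ℂ) * Complex.I) = z :=
      Complex.norm_mul_exp_arg_mul_I z
    have h3 : (‖z‖ : ℂ) * Complex.exp ((c.im : ℂ) * Complex.I) = z := by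
      rw [habs, hz, Complex.ofReal_exp, ← Complex.exp_add]
      congr 1
      simp [Complex.ext_iff]
    have hab : (‖z‖ : ℂ) ≠ 0 :=
      Complex.ofReal_ne_zero.mpr (norm_ne_zero_iff.mpr (Complex.exp_ne_zero c))
    exact mul_left_cancel₀ hab (h3.trans h2.symm)
  obtain ⟨n, hn⟩ := Complex.exp_eq_exp_iff_exists_int.mp h1
  have him : c.im = Complex.arg z + n * (2 * Real.pi) := by
    have := congrArg Complex.im hn
    simpa [Complex.ext_iff] using this
  set m : ℤ := if 0 ≤ Complex.arg z then n else n - 1 with hm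
  refine ⟨m, fun t => ?_⟩
  have harg : arg₀ z + 2 * m * Real.pi = c.im := by
    rw [arg₀, hm]
    split_ifs with h
    · rw [him]; push_cast; ring
    · rw [him]; push_cast; ring
  rw [cpowN, habs]
  have hrpow : Real.exp c.re ^ t = Real.exp (c.re * t) := by
    rw [Real.rpow_def_of_pos (Real.exp_pos _), Real.log_exp]
  rw [hrpow, Complex.ofReal_exp, ← Complex.exp_add]
  congr 1
  have : ((arg₀ z : ℂ) + 2 * (m : ℂ) * (Real.pi : ℂ)) = (c.im : ℂ) := by
    exact_mod_cast congrArg (fun x : ℝ => (x : ℂ)) harg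
  rw [this]
  apply Complex.ext <;> simp <;> ring

theorem stmt11 (f : ℝ → ℂ) (hcont : Continuous f)
    (hne : ∀ t : ℝ, f t ≠ 0)
    (hhom : ∀ s t : ℝ, f (s + t) = f s * f t) :
    ∃ (z : ℂ) (n : ℤ), z ≠ 0 ∧ ∀ t : ℝ, f t = cpowN z t n := by
  obtain ⟨c, hc⟩ := exists_exp_of_hom f hcont hne hhom
  obtain ⟨n, hn⟩ := exp_eq_cpowN c
  exact ⟨Complex.exp c, n, Complex.exp_ne_zero c, fun t => (hc t).trans (hn t)⟩
end

section
/- Let z₁, z₂ be nonzero complex numbers, let t : ℝ, and let n, m : ℤ. Set k := n + m if arg₀ z₁ + arg₀ z₂ < 2*π, and k := n + m + 1 if arg₀ z₁ + arg₀ z₂ ≥ 2*π. Then (z₁ * z₂)^{t;k} = z₁^{t;n} * z₂^{t;m}. -/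
open Real Complex

lemma arg₀_nonneg (z : ℂ) : 0 ≤ arg₀ z := by
  unfold arg₀; split
  · assumption
  · have := Complex.neg_pi_lt_arg z
    have := Real.pi_pos
    linarith

lemma arg₀_lt (z : ℂ) : arg₀ z < 2 * Real.pi := by
  unfold arg₀; split
  · have := Complex.arg_le_pi z
    have := Real.pi_pos
    linarith
  · rename_i h
    push_neg at h
    linarith

lemma arg₀_sub_arg (z : ℂ) : ∃ j : ℤ, arg₀ z = Complex.arg z + 2 * Real.pi * j := by
  unfold arg₀; split
  · exact ⟨0, by simp⟩
  · exact ⟨1, by push_cast; ring⟩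

lemma arg₀_mul (z₁ z₂ : ℂ) (h1 : z₁ ≠ 0) (h2 : z₂ ≠ 0) :
    arg₀ (z₁ * z₂) =
      if arg₀ z₁ + arg₀ z₂ < 2 * Real.pi then arg₀ z₁ + arg₀ z₂
      else arg₀ z₁ + arg₀ z₂ - 2 * Real.pi := by
  obtain ⟨l, hl⟩ := (Real.Angle.angle_eq_iff_two_pi_dvd_sub).1
    (Complex.arg_mul_coe_angle h1 h2)
  obtain ⟨j, hj⟩ := arg₀_sub_arg (z₁ * z₂)
  obtain ⟨j₁, hj₁⟩ := arg₀_sub_arg z₁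
  obtain ⟨j₂, hj₂⟩ := arg₀_sub_arg z₂
  have hπ := Real.pi_pos
  set A : ℝ := if arg₀ z₁ + arg₀ z₂ < 2 * Real.pi then arg₀ z₁ + arg₀ z₂
      else arg₀ z₁ + arg₀ z₂ - 2 * Real.pi with hA
  have hA0 : 0 ≤ A := by
    rw [hA]; split
    · have := arg₀_nonneg z₁; have := arg₀_nonneg z₂; linarith
    · rename_i h; push_neg at h; linarith
  have hA2 : A < 2 * Real.pi := by
    rw [hA]; split
    · assumption
    · have := arg₀_lt z₁; have := arg₀_lt z₂; linarith
  -- the difference is a multiple of 2π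
  have hdiff : ∃ M : ℤ, arg₀ (z₁ * z₂) - A = 2 * Real.pi * M := by
    rw [hA]; split
    · exact ⟨j + l - j₁ - j₂, by push_cast; linear_combination hj + hl - hj₁ - hj₂⟩
    · exact ⟨j + l - j₁ - j₂ + 1, by push_cast; linear_combination hj + hl - hj₁ - hj₂⟩
  obtain ⟨M, hM⟩ := hdiff
  have h0 := arg₀_nonneg (z₁ * z₂)
  have h2' := arg₀_lt (z₁ * z₂)
  have hMlt : (M : ℝ) < 1 := by nlinarith
  have hMgt : (-1 : ℝ) < M := by nlinarith
  have hM1 : M < 1 := by exact_mod_cast hMlt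
  have hM2 : -1 < M := by exact_mod_cast hMgt
  have : M = 0 := by omega
  rw [this] at hM
  push_cast at hM
  linarith

theorem stmt12 (z₁ z₂ : ℂ) (hz₁ : z₁ ≠ 0) (hz₂ : z₂ ≠ 0) (t : ℝ) (n m : ℤ)
    (k : ℤ)
    (hk : k = if arg₀ z₁ + arg₀ z₂ < 2 * Real.pi then n + m else n + m + 1) :
    cpowN (z₁ * z₂) t k = cpowN z₁ t n * cpowN z₂ t m := by
  have hE : arg₀ (z₁ * z₂) + 2 * k * Real.pi
      = (arg₀ z₁ + 2 * n * Real.pi) + (arg₀ z₂ + 2 * m * Real.pi) := by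
    rw [arg₀_mul z₁ z₂ hz₁ hz₂]
    split_ifs with h <;> rw [hk] <;> simp [h] <;> ring
  have hEC : ((arg₀ (z₁ * z₂) : ℝ) : ℂ) + 2 * (k : ℂ) * (Real.pi : ℂ)
      = (((arg₀ z₁ : ℝ) : ℂ) + 2 * (n : ℂ) * (Real.pi : ℂ))
        + (((arg₀ z₂ : ℝ) : ℂ) + 2 * (m : ℂ) * (Real.pi : ℂ)) := by
    exact_mod_cast congrArg (fun x : ℝ => (x : ℂ)) hE
  unfold cpowN
  rw [norm_mul, Real.mul_rpow (norm_nonneg _) (norm_nonneg _)]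
  push_cast
  rw [show Complex.I * (t : ℂ) * (((arg₀ (z₁ * z₂) : ℝ) : ℂ) + 2 * (k : ℂ) * (Real.pi : ℂ))
      = Complex.I * (t : ℂ) * (((arg₀ z₁ : ℝ) : ℂ) + 2 * (n : ℂ) * (Real.pi : ℂ))
        + Complex.I * (t : ℂ) * (((arg₀ z₂ : ℝ) : ℂ) + 2 * (m : ℂ) * (Real.pi : ℂ)) by
      rw [← mul_add, hEC], Complex.exp_add]
  ring
end

section
/- Let z be a nonzero complex number, let s, t : ℝ, and let n : ℤ. Set k := ⌊s * (arg₀ z + 2 * n * π) / (2 * π)⌋ - n (for n = 0 this is the greatest integer less than or equal to s * arg₀ z / (2π)). Then z^{(s*t);n} = (z^{s;n})^{t;(n+k)}. -/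
open Real Complex

lemma arg0_of_polar (r θ : ℝ) (hr : 0 < r) :
    arg₀ ((r : ℂ) * Complex.exp ((θ : ℂ) * Complex.I)) =
      toIcoMod (mul_pos two_pos Real.pi_pos) 0 θ := by
  have hπ := Real.pi_pos
  have harg : Complex.arg ((r : ℂ) * Complex.exp ((θ : ℂ) * Complex.I)) =
      toIocMod (mul_pos two_pos Real.pi_pos) (-π) θ := by
    rw [Complex.arg_real_mul _ hr, Complex.arg_exp_mul_I]
  have hmem := toIocMod_mem_Ioc (mul_pos two_pos Real.pi_pos) (-π) θ
  have hdiv := toIocMod_add_toIocDiv_zsmul (mul_pos two_pos Real.pi_pos) (-π) θ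
  generalize hA : toIocMod (mul_pos two_pos Real.pi_pos) (-π) θ = a at harg hmem hdiv
  have h1 : -π < a := hmem.1
  have h2 : a ≤ π := by have := hmem.2; linarith
  unfold arg₀
  rw [harg]
  symm
  rw [toIcoMod_eq_iff]
  refine ⟨⟨?_, ?_⟩, ?_⟩
  · split_ifs with h
    · exact h
    · push_neg at h; linarith
  · split_ifs with h <;> simp <;> linarith
  · split_ifs with h
    · exact ⟨toIocDiv (mul_pos two_pos Real.pi_pos) (-π) θ, hdiv.symm⟩
    · refine ⟨toIocDiv (mul_pos two_pos Real.pi_pos) (-π) θ - 1, ?_⟩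
      have h3 := hdiv
      push_cast [sub_zsmul, zsmul_eq_mul] at h3 ⊢
      linarith

theorem stmt14 (z : ℂ) (hz : z ≠ 0) (s t : ℝ) (n : ℤ) (k : ℤ)
    (hk : k = ⌊s * (arg₀ z + 2 * n * Real.pi) / (2 * Real.pi)⌋ - n) :
    cpowN z (s * t) n = cpowN (cpowN z s n) t (n + k) := by
  have hπ := Real.pi_pos
  set θ : ℝ := s * (arg₀ z + 2 * n * π) with hθ
  have hr : (0:ℝ) < ‖z‖ ^ s :=
    Real.rpow_pos_of_pos (norm_pos_iff.mpr hz) s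
  have hw : cpowN z s n = ((‖z‖ ^ s : ℝ) : ℂ) * Complex.exp ((θ : ℂ) * Complex.I) := by
    unfold cpowN
    congr 1
    congr 1
    push_cast [hθ]
    ring
  have habs : ‖cpowN z s n‖ = ‖z‖ ^ s := by
    rw [hw, norm_mul, Complex.norm_exp]
    simp [_root_.abs_of_nonneg hr.le]
  have harg : arg₀ (cpowN z s n) = θ - (⌊θ / (2 * π)⌋ : ℤ) * (2 * π) := by
    rw [hw, arg0_of_polar _ _ hr]
    rw [toIcoMod, toIcoDiv_eq_floor, sub_zero, zsmul_eq_mul]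
  obtain ⟨w, hwdef⟩ : ∃ w, cpowN z s n = w := ⟨_, rfl⟩
  rw [hwdef] at habs harg ⊢
  unfold cpowN
  rw [habs, harg]
  congr 1
  · norm_cast
    exact Real.rpow_mul (norm_nonneg z) s t
  · congr 1
    have hfl : ((n:ℝ) + (k:ℝ)) = (⌊θ / (2 * π)⌋ : ℝ) := by
      rw [hk]; push_cast; ring
    clear_value θ
    subst hθ
    push_cast [hk]
    ring
end

section
/- For each natural number n ≥ 1 let a n : ZMod n be the sum ∑_{j=1}^{n} (j ! : ZMod n). Then: (i) for all natural numbers m, n ≥ 1 with m ∣ n, the canonical ring homomorphism ZMod n → ZMod m maps a n to a m (so the family (a n) is a compatible element of the inverse limit of the rings ZMod n along divisibility, a 'pseudointeger'); and (ii) there is no integer k such that (k : ZMod n) = a n for all n ≥ 1 (so this pseudointeger does not come from an integer). -/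
/-- The sum `∑_{j=1}^{n} j!` reduced modulo `n`. -/
def factSum (n : ℕ) : ZMod n := ∑ j ∈ Finset.Icc 1 n, (Nat.factorial j : ZMod n)

/-- Integer version of the factorial sum. -/
def S (n : ℕ) : ℕ := ∑ j ∈ Finset.Icc 1 n, Nat.factorial j

lemma sum_trunc (M n N : ℕ) [NeZero M] (hnN : n ≤ N)
    (h : ∀ j, n < j → M ∣ Nat.factorial j) :
    ∑ j ∈ Finset.Icc 1 N, (Nat.factorial j : ZMod M)
      = ∑ j ∈ Finset.Icc 1 n, (Nat.factorial j : ZMod M) := by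
  rw [← Finset.sum_subset (Finset.Icc_subset_Icc_right hnN)]
  intro j hj hjn
  simp only [Finset.mem_Icc] at hj hjn
  rw [ZMod.natCast_eq_zero_iff]
  exact h j (by omega)

lemma S_le (n : ℕ) : S n ≤ n * Nat.factorial n :=
  calc S n ≤ ∑ _j ∈ Finset.Icc 1 n, Nat.factorial n :=
        Finset.sum_le_sum fun j hj => Nat.factorial_le (Finset.mem_Icc.mp hj).2
    _ = n * Nat.factorial n := by simp [Nat.card_Icc]

lemma key_dvd (k : ℤ) (hk : ∀ n : ℕ, 1 ≤ n → (k : ZMod n) = factSum n) (n : ℕ) :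
    ((Nat.factorial (n + 1) : ℤ)) ∣ k - (S n : ℤ) := by
  set N := Nat.factorial (n + 1) with hN
  have hNpos : 0 < N := Nat.factorial_pos _
  haveI : NeZero N := ⟨hNpos.ne'⟩
  have h1 := hk N hNpos
  have h2 : factSum N = ((S n : ℕ) : ZMod N) := by
    rw [factSum, sum_trunc N n N (Nat.self_le_factorial _ |>.trans (Nat.factorial_le (by omega)))
      (fun j hj => Nat.factorial_dvd_factorial (by omega)), S]
    push_cast
    rfl
  rw [h2] at h1
  have : ((k - (S n : ℤ) : ℤ) : ZMod N) = 0 := by push_cast [h1]; ring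
  exact (ZMod.intCast_zmod_eq_zero_iff_dvd _ N).mp this

lemma key_eq (k : ℤ) (hk : ∀ n : ℕ, 1 ≤ n → (k : ZMod n) = factSum n) (n : ℕ)
    (hkn : |k| < Nat.factorial n) : k = (S n : ℤ) := by
  have hd := key_dvd k hk n
  have hbound : |k - (S n : ℤ)| < Nat.factorial (n + 1) := by
    have hS : (S n : ℤ) ≤ n * Nat.factorial n := by exact_mod_cast S_le n
    have hfact : (Nat.factorial (n + 1) : ℤ) = (n + 1) * Nat.factorial n := by
      exact_mod_cast Nat.factorial_succ n
    have h0 : (0 : ℤ) ≤ (S n : ℤ) := Int.natCast_nonneg _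
    rw [abs_lt] at hkn ⊢
    constructor <;> nlinarith
  have := Int.eq_zero_of_abs_lt_dvd hd hbound
  omega

theorem stmt15 :
    (∀ (m n : ℕ) (h : m ∣ n), 1 ≤ m → 1 ≤ n →
        ZMod.castHom h (ZMod m) (factSum n) = factSum m) ∧
      ¬∃ k : ℤ, ∀ n : ℕ, 1 ≤ n → (k : ZMod n) = factSum n := by
  constructor
  · intro m n h hm hn
    haveI : NeZero m := ⟨by omega⟩
    rw [factSum, map_sum]
    simp only [map_natCast]
    rw [factSum]
    exact sum_trunc m m n (Nat.le_of_dvd (by omega) h)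
      (fun j hj => dvd_trans (Nat.dvd_factorial (by omega) (le_refl m))
        (Nat.factorial_dvd_factorial (by omega)))
  · rintro ⟨k, hk⟩
    set n := k.natAbs + 1 with hn
    have h1 : |k| < Nat.factorial n := by
      have : (n : ℤ) ≤ Nat.factorial n := by exact_mod_cast Nat.self_le_factorial n
      rw [Int.abs_eq_natAbs]
      omega
    have h2 : |k| < Nat.factorial (n + 1) := by
      have : (Nat.factorial n : ℤ) ≤ Nat.factorial (n + 1) := by
        exact_mod_cast Nat.factorial_le (by omega)
      omega
    have e1 := key_eq k hk n h1
    have e2 := key_eq k hk (n + 1) h2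
    have : S (n + 1) = S n + Nat.factorial (n + 1) := by
      rw [S, S, Finset.sum_Icc_succ_top (by omega)]
    have := Nat.factorial_pos (n + 1)
    omega
end

section
/- Let K be a commutative ring that is an algebra over ℝ, and let f, g : ℝ → K be Noetherian sequences. Then the derivative is a derivation with respect to convolution: D (f ⊛ g) = (D f) ⊛ g + f ⊛ (D g), i.e. for every c : ℝ, (c + 1) • (f ⊛ g) (c + 1) = ∑ᶠ a, ((a + 1) • f (a + 1)) * g (c - a) + ∑ᶠ a, f a * ((c - a + 1) • g (c - a + 1)). -/
/-- The formal derivative, mirroring `D x^a = a x^(a-1)` on formal series. -/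
def der {K : Type*} [CommRing K] [Algebra ℝ K] (f : ℝ → K) : ℝ → K :=
  fun a => (a + 1) • f (a + 1)

lemma conv_support_finite {K : Type*} [CommRing K] (f g : ℝ → K)
    (hf : IsNoetherianSeq f) (hg : IsNoetherianSeq g) (c : ℝ) :
    {a : ℝ | f a ≠ 0 ∧ g (c - a) ≠ 0}.Finite := by
  rcases Set.eq_empty_or_nonempty (Function.support g) with h | ⟨b₀, hb₀⟩
  · refine Set.Finite.subset (Set.finite_empty) ?_
    intro a ⟨_, ha2⟩
    exact absurd (Set.eq_empty_iff_forall_notMem.mp h (c - a)) (by simpa using ha2)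
  · have hfin : {b ∈ Function.support g | b ≤ b₀}.Finite := hg b₀
    have hne : ({b ∈ Function.support g | b ≤ b₀} : Set ℝ).Nonempty := ⟨b₀, hb₀, le_refl _⟩
    obtain ⟨m, hm, hmin⟩ := Set.Finite.exists_minimalFor id _ hfin hne
    have hlow : ∀ b ∈ Function.support g, m ≤ b := by
      intro b hb
      by_cases hbb : b ≤ b₀
      · by_contra hc
        push_neg at hc
        have := hmin (j := b) ⟨hb, hbb⟩ (le_of_lt hc)
        simp only [id] at this
        linarith
      · push_neg at hbb
        linarith [hm.2]
    refine Set.Finite.subset (hf (c - m)) ?_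
    rintro a ⟨ha1, ha2⟩
    refine ⟨ha1, ?_⟩
    have := hlow (c - a) ha2
    linarith

theorem stmt16 {K : Type*} [CommRing K] [Algebra ℝ K] (f g : ℝ → K)
    (hf : IsNoetherianSeq f) (hg : IsNoetherianSeq g) :
    der (conv f g) = conv (der f) g + conv f (der g) := by
  funext c
  simp only [der, conv, Pi.add_apply]
  have hS : {a : ℝ | f a ≠ 0 ∧ g (c + 1 - a) ≠ 0}.Finite := conv_support_finite f g hf hg (c + 1)
  have hsupp : Function.support (fun a => f a * g (c + 1 - a)) ⊆
      {a : ℝ | f a ≠ 0 ∧ g (c + 1 - a) ≠ 0} := by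
    intro a ha
    by_contra h
    simp only [Set.mem_setOf_eq, not_and_or, not_not] at h
    rcases h with h | h <;> simp [Function.mem_support, h] at ha
  rw [smul_finsum' (c + 1) (hS.subset hsupp)]
  have key : ∀ a : ℝ, (c + 1) • (f a * g (c + 1 - a)) =
      (a • f a) * g (c + 1 - a) + f a * ((c - a + 1) • g (c - a + 1)) := by
    intro a
    have : c + 1 = a + (c - a + 1) := by ring
    rw [this, add_smul, smul_mul_assoc, mul_smul_comm]
    congr 2 <;> ring_nf
  simp only [key]
  have h1 : (Function.support fun a => (a • f a) * g (c + 1 - a)).Finite := by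
    refine hS.subset ?_
    intro a ha
    by_contra h
    simp only [Set.mem_setOf_eq, not_and_or, not_not] at h
    rcases h with h | h
    · exact ha (by simp [h])
    · exact ha (by simp [h])
  have h2 : (Function.support fun a => f a * ((c - a + 1) • g (c - a + 1))).Finite := by
    have : Function.support (fun a => f a * ((c - a + 1) • g (c - a + 1))) ⊆
        {a : ℝ | f a ≠ 0 ∧ g (c + 1 - a) ≠ 0} := by
      intro a ha
      simp only [Function.mem_support] at ha
      constructor
      · intro h; apply ha; simp [h]
      · intro h
        apply ha
        have : c - a + 1 = c + 1 - a := by ring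
        rw [this, h, smul_zero, mul_zero]
    exact hS.subset this
  rw [finsum_add_distrib h1 h2]
  congr 1
  have := finsum_comp (g := fun a => (a • f a) * g (c + 1 - a)) (fun a : ℝ => a + 1)
    (Equiv.addRight (1:ℝ)).bijective
  rw [← this]
  apply finsum_congr
  intro a
  show (a + 1) • f (a + 1) * g (c + 1 - (a + 1)) = (a + 1) • f (a + 1) * g (c - a)
  have : c + 1 - (a + 1) = c - a := by ring
  rw [this]
end
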